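/- Simulation implies provability: if (Γ1;A) ≼_s (Γ2;Δ), where (Γ1;A) is the state whose linear part is the singleton multiset {A}, then Γ2;Δ ⊢ A is derivable in the DILL sequent calculus. -/

import Mathlib

/-- Formulas of the linear-logic fragment: atoms, 1, ⊗, ⊤, &, atomic-antecedent ⊸, !. -/
inductive Formula : Type where
  | atom : ℕ → Formula
  | one : Formula
  | tensor : Formula → Formula → Formula
  | top : Formula
  | with_ : Formula → Formula → Formula
  | limp : ℕ → Formula → Formula
  | bang : Formula → Formula
deriving DecidableEq

/-- Contexts are finite multisets of formulas. -/
abbrev Ctx : Type := Multiset Formula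

/-- A process state (Γ;Δ): unrestricted context Γ and linear context Δ. -/
abbrev State : Type := Ctx × Ctx

/-- Composition of states: ((Γ1;Δ1),(Γ2;Δ2)) = (Γ1,Γ2; Δ1,Δ2). -/
def State.comp (s t : State) : State := (s.1 + t.1, s.2 + t.2)

/-- DILL derivability Γ;Δ ⊢ A. -/
inductive Derives : Ctx → Ctx → Formula → Prop where
  | init (Γ : Ctx) (a : ℕ) : Derives Γ {Formula.atom a} (Formula.atom a)
  | clone {Γ Δ : Ctx} {A C : Formula} :
      Derives (A ::ₘ Γ) (A ::ₘ Δ) C → Derives (A ::ₘ Γ) Δ C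
  | tensorR {Γ Δ₁ Δ₂ : Ctx} {A B : Formula} :
      Derives Γ Δ₁ A → Derives Γ Δ₂ B → Derives Γ (Δ₁ + Δ₂) (Formula.tensor A B)
  | tensorL {Γ Δ : Ctx} {A B C : Formula} :
      Derives Γ (A ::ₘ B ::ₘ Δ) C → Derives Γ (Formula.tensor A B ::ₘ Δ) C
  | oneR (Γ : Ctx) : Derives Γ 0 Formula.one
  | oneL {Γ Δ : Ctx} {C : Formula} :
      Derives Γ Δ C → Derives Γ (Formula.one ::ₘ Δ) C
  | withR {Γ Δ : Ctx} {A B : Formula} :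
      Derives Γ Δ A → Derives Γ Δ B → Derives Γ Δ (Formula.with_ A B)
  | withL₁ {Γ Δ : Ctx} {A₁ A₂ C : Formula} :
      Derives Γ (A₁ ::ₘ Δ) C → Derives Γ (Formula.with_ A₁ A₂ ::ₘ Δ) C
  | withL₂ {Γ Δ : Ctx} {A₁ A₂ C : Formula} :
      Derives Γ (A₂ ::ₘ Δ) C → Derives Γ (Formula.with_ A₁ A₂ ::ₘ Δ) C
  | topR (Γ Δ : Ctx) : Derives Γ Δ Formula.top
  | limpR {Γ Δ : Ctx} {a : ℕ} {B : Formula} :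
      Derives Γ (Formula.atom a ::ₘ Δ) B → Derives Γ Δ (Formula.limp a B)
  | limpL {Γ Δ₁ Δ₂ : Ctx} {a : ℕ} {B C : Formula} :
      Derives Γ Δ₁ (Formula.atom a) → Derives Γ (B ::ₘ Δ₂) C →
      Derives Γ (Formula.limp a B ::ₘ (Δ₁ + Δ₂)) C
  | bangR {Γ : Ctx} {A : Formula} :
      Derives Γ 0 A → Derives Γ 0 (Formula.bang A)
  | bangL {Γ Δ : Ctx} {A C : Formula} :
      Derives (A ::ₘ Γ) Δ C → Derives Γ (Formula.bang A ::ₘ Δ) C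

/-- The logical preorder (Γ1;Δ1) ≼ₗ (Γ2;Δ2). -/
def LogicalPre (s t : State) : Prop :=
  ∀ (Γ' Δ' : Ctx) (C : Formula),
    Derives (Γ' + s.1) (Δ' + s.2) C → Derives (Γ' + t.1) (Δ' + t.2) C

/-- The reduction relation ⇝ on process states. -/
inductive Red : State → State → Prop where
  | tensor (Γ Δ : Ctx) (A B : Formula) :
      Red (Γ, Formula.tensor A B ::ₘ Δ) (Γ, A ::ₘ B ::ₘ Δ)
  | one (Γ Δ : Ctx) :
      Red (Γ, Formula.one ::ₘ Δ) (Γ, Δ)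
  | with₁ (Γ Δ : Ctx) (A₁ A₂ : Formula) :
      Red (Γ, Formula.with_ A₁ A₂ ::ₘ Δ) (Γ, A₁ ::ₘ Δ)
  | with₂ (Γ Δ : Ctx) (A₁ A₂ : Formula) :
      Red (Γ, Formula.with_ A₁ A₂ ::ₘ Δ) (Γ, A₂ ::ₘ Δ)
  | comm (Γ Δ : Ctx) (a : ℕ) (B : Formula) :
      Red (Γ, Formula.atom a ::ₘ Formula.limp a B ::ₘ Δ) (Γ, B ::ₘ Δ)
  | bang (Γ Δ : Ctx) (A : Formula) :
      Red (Γ, Formula.bang A ::ₘ Δ) (A ::ₘ Γ, Δ)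
  | clone (Γ Δ : Ctx) (A : Formula) :
      Red (A ::ₘ Γ, Δ) (A ::ₘ Γ, A ::ₘ Δ)

/-- ⇝*, the reflexive-transitive closure of reduction. -/
def RedStar : State → State → Prop := Relation.ReflTransGen Red

/-- Labels of the LTS: τ, send !a, receive ?a. -/
inductive Label : Type where
  | tau : Label
  | send : ℕ → Label
  | recv : ℕ → Label
deriving DecidableEq

/-- The labeled transition system on states. -/
inductive Step : State → Label → State → Prop where
  | send (Γ Δ : Ctx) (a : ℕ) :
      Step (Γ, Formula.atom a ::ₘ Δ) (Label.send a) (Γ, Δ)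
  | recv (Γ Δ : Ctx) (a : ℕ) (B : Formula) :
      Step (Γ, Formula.limp a B ::ₘ Δ) (Label.recv a) (Γ, B ::ₘ Δ)
  | comm {s₁ s₁' s₂ s₂' : State} {a : ℕ} :
      Step s₁ (Label.send a) s₁' → Step s₂ (Label.recv a) s₂' →
      Step (State.comp s₁ s₂) Label.tau (State.comp s₁' s₂')
  | tensor (Γ Δ : Ctx) (A B : Formula) :
      Step (Γ, Formula.tensor A B ::ₘ Δ) Label.tau (Γ, A ::ₘ B ::ₘ Δ)
  | one (Γ Δ : Ctx) :
      Step (Γ, Formula.one ::ₘ Δ) Label.tau (Γ, Δ)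
  | with₁ (Γ Δ : Ctx) (A₁ A₂ : Formula) :
      Step (Γ, Formula.with_ A₁ A₂ ::ₘ Δ) Label.tau (Γ, A₁ ::ₘ Δ)
  | with₂ (Γ Δ : Ctx) (A₁ A₂ : Formula) :
      Step (Γ, Formula.with_ A₁ A₂ ::ₘ Δ) Label.tau (Γ, A₂ ::ₘ Δ)
  | bang (Γ Δ : Ctx) (A : Formula) :
      Step (Γ, Formula.bang A ::ₘ Δ) Label.tau (A ::ₘ Γ, Δ)
  | clone (Γ Δ : Ctx) (A : Formula) :
      Step (A ::ₘ Γ, Δ) Label.tau (A ::ₘ Γ, A ::ₘ Δ)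

/-- ⇒τ, the reflexive-transitive closure of —τ→. -/
def WeakTau : State → State → Prop :=
  Relation.ReflTransGen (fun s t => Step s Label.tau t)

/-- Weak transition ⇒β: for β = τ it is ⇒τ, otherwise ⇒τ—β→⇒τ. -/
def WeakStep (s : State) (β : Label) (t : State) : Prop :=
  match β with
  | Label.tau => WeakTau s t
  | _ => ∃ u v, WeakTau s u ∧ Step u β v ∧ WeakTau v t

/-- A label is a "non-receive" label α (i.e., τ or a send). -/
def Label.isNonRecv : Label → Prop
  | Label.recv _ => False
  | _ => True

/-- A relation on states is a simulation. -/
def IsSimulation (R : State → State → Prop) : Prop :=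
  ∀ s t, R s t →
    (s.2 = 0 → ∃ Γ₂' : Ctx, WeakTau t (Γ₂', 0) ∧ R (s.1, 0) (Γ₂', 0)) ∧
    (∀ s₁ s₂ : State, s = State.comp s₁ s₂ →
      ∃ t₁ t₂ : State, WeakTau t (State.comp t₁ t₂) ∧ R s₁ t₁ ∧ R s₂ t₂) ∧
    (∀ (α : Label) (s' : State), α.isNonRecv → Step s α s' →
      ∃ t', WeakStep t α t' ∧ R s' t') ∧
    (∀ (a : ℕ) (s' : State), Step s (Label.recv a) s' →
      ∃ t', WeakTau (t.1, Formula.atom a ::ₘ t.2) t' ∧ R s' t')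

/-- The simulation preorder ≼ₛ. -/
def SimPre (s t : State) : Prop :=
  ∃ R : State → State → Prop, IsSimulation R ∧ R s t

/-- Strong barb: (Γ;Δ)↓a. -/
def Barb (s : State) (a : ℕ) : Prop := Formula.atom a ∈ s.2

/-- Weak barb: (Γ;Δ)⇓a. -/
def WeakBarb (s : State) (a : ℕ) : Prop := ∃ t, RedStar s t ∧ Barb t a

def BarbPreserving (R : State → State → Prop) : Prop :=
  ∀ s t a, R s t → Barb s a → WeakBarb t a

def ReductionClosed (R : State → State → Prop) : Prop :=
  ∀ s t s', R s t → Red s s' → ∃ t', RedStar t t' ∧ R s' t'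

def Compositional (R : State → State → Prop) : Prop :=
  ∀ s t u, R s t → R (State.comp s u) (State.comp t u)

def PartitionPreserving (R : State → State → Prop) : Prop :=
  ∀ s t, R s t →
    (s.2 = 0 → ∃ Γ₂' : Ctx, RedStar t (Γ₂', 0) ∧ R (s.1, 0) (Γ₂', 0)) ∧
    (∀ s₁ s₂ : State, s = State.comp s₁ s₂ →
      ∃ t₁ t₂ : State, RedStar t (State.comp t₁ t₂) ∧ R s₁ t₁ ∧ R s₂ t₂)

/-- The contextual preorder ≼_c: the largest barb-preserving, reduction-closed,
compositional, partition-preserving relation on states. -/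
def CtxPre (s t : State) : Prop :=
  ∃ R : State → State → Prop,
    BarbPreserving R ∧ ReductionClosed R ∧ Compositional R ∧ PartitionPreserving R ∧ R s t

/-- ⊗Δ: the ⊗-conjunction of all formulas in Δ (1 if Δ is empty). -/
noncomputable def bigTensor (Δ : Ctx) : Formula :=
  Δ.toList.foldr Formula.tensor Formula.one

/-- !Γ: prefix every formula of Γ with !. -/
def bangCtx (Γ : Ctx) : Ctx := Γ.map Formula.bang

/-! Each transition of the labelled transition system, read backwards, is a left rule of DILL
(a communication is `⊸L` with an `init` premise), so derivability flows back along `⇒τ`. A state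
simulating `(Γ₁; A)` has to match the transition offered by the outermost connective of `A`;
by induction on `A` the subformulas are derivable in the matching state, the right rule of that
connective closes the sequent, and the derivation is transported back. For an atom `a`, the
linear context left over after sending `a` still reaches the empty context, hence derives `1`,
and a cut on `1` removes it. -/

namespace Derives

theorem weaken {Γ Γ' Δ : Ctx} {C : Formula} (hΓ : Γ ≤ Γ') (h : Derives Γ Δ C) :
    Derives Γ' Δ C := by
  induction h generalizing Γ' with
  | init _ a => exact init _ a
  | @clone Γ Δ A C _ ih =>
    have hA : A ∈ Γ' := Multiset.mem_of_le hΓ (Multiset.mem_cons_self A Γ)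
    have h' := ih hΓ
    rw [← Multiset.cons_erase hA] at h' ⊢
    exact clone h'
  | tensorR _ _ ih₁ ih₂ => exact tensorR (ih₁ hΓ) (ih₂ hΓ)
  | tensorL _ ih => exact tensorL (ih hΓ)
  | oneR _ => exact oneR _
  | oneL _ ih => exact oneL (ih hΓ)
  | withR _ _ ih₁ ih₂ => exact withR (ih₁ hΓ) (ih₂ hΓ)
  | withL₁ _ ih => exact withL₁ (ih hΓ)
  | withL₂ _ ih => exact withL₂ (ih hΓ)
  | topR _ _ => exact topR _ _
  | limpR _ ih => exact limpR (ih hΓ)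
  | limpL _ _ ih₁ ih₂ => exact limpL (ih₁ hΓ) (ih₂ hΓ)
  | bangR _ ih => exact bangR (ih hΓ)
  | bangL _ ih => exact bangL (ih (Multiset.cons_le_cons _ hΓ))

theorem cut_one {Γ Δ Δ' : Ctx} {C : Formula} (h : Derives Γ Δ Formula.one)
    (h' : Derives Γ Δ' C) : Derives Γ (Δ + Δ') C := by
  generalize hone : Formula.one = F at h
  induction h generalizing Δ' C with
  | init | tensorR | withR | topR | limpR | bangR => cases hone
  | oneR => simpa using h'
  | clone _ ih => exact clone (by simpa using ih h' hone)
  | tensorL _ ih => rw [Multiset.cons_add]; exact tensorL (by simpa using ih h' hone)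
  | oneL _ ih => rw [Multiset.cons_add]; exact oneL (ih h' hone)
  | withL₁ _ ih => rw [Multiset.cons_add]; exact withL₁ (by simpa using ih h' hone)
  | withL₂ _ ih => rw [Multiset.cons_add]; exact withL₂ (by simpa using ih h' hone)
  | limpL hatom _ _ ih =>
    rw [Multiset.cons_add, add_assoc]
    exact limpL hatom (by simpa using ih h' hone)
  | bangL _ ih =>
    rw [Multiset.cons_add]
    exact bangL (ih (h'.weaken (Multiset.le_cons_self _ _)) hone)

theorem of_step_tau {s t : State} (hst : Step s Label.tau t) {C : Formula}
    (h : Derives t.1 t.2 C) : Derives s.1 s.2 C := by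
  cases hst with
  | @comm _ _ _ _ a hsend hrecv =>
    cases hsend
    cases hrecv
    simp only [State.comp, Multiset.add_cons] at h ⊢
    simpa using limpL (init _ a) h
  | tensor => exact tensorL h
  | one => exact oneL h
  | with₁ => exact withL₁ h
  | with₂ => exact withL₂ h
  | bang => exact bangL h
  | clone => exact clone h

theorem of_weakTau {s t : State} (hst : WeakTau s t) {C : Formula}
    (h : Derives t.1 t.2 C) : Derives s.1 s.2 C := by
  induction hst with
  | refl => exact h
  | tail _ hstep ih => exact ih (of_step_tau hstep h)

end Derives

theorem isSimulation_simPre : IsSimulation SimPre := by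
  rintro s t ⟨R, hR, hst⟩
  obtain ⟨hempty, hsplit, hact, hrecv⟩ := hR s t hst
  refine ⟨fun h0 => ?_, fun s₁ s₂ hs => ?_, fun α s' hα hstep => ?_, fun a s' hstep => ?_⟩
  · obtain ⟨Γ', hw, hr⟩ := hempty h0
    exact ⟨Γ', hw, R, hR, hr⟩
  · obtain ⟨t₁, t₂, hw, hr₁, hr₂⟩ := hsplit s₁ s₂ hs
    exact ⟨t₁, t₂, hw, ⟨R, hR, hr₁⟩, R, hR, hr₂⟩
  · obtain ⟨t', hw, hr⟩ := hact α s' hα hstep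
    exact ⟨t', hw, R, hR, hr⟩
  · obtain ⟨t', hw, hr⟩ := hrecv a s' hstep
    exact ⟨t', hw, R, hR, hr⟩

namespace SimPre

theorem exists_weakTau_empty {Γ₁ : Ctx} {t : State} (h : SimPre (Γ₁, 0) t) :
    ∃ Γ₂, WeakTau t (Γ₂, 0) ∧ SimPre (Γ₁, 0) (Γ₂, 0) :=
  (isSimulation_simPre _ _ h).1 rfl

theorem exists_split {s₁ s₂ t : State} (h : SimPre (State.comp s₁ s₂) t) :
    ∃ t₁ t₂, WeakTau t (State.comp t₁ t₂) ∧ SimPre s₁ t₁ ∧ SimPre s₂ t₂ :=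
  (isSimulation_simPre _ _ h).2.1 s₁ s₂ rfl

theorem exists_tau {s s' t : State} (h : SimPre s t) (hstep : Step s Label.tau s') :
    ∃ t', WeakTau t t' ∧ SimPre s' t' :=
  (isSimulation_simPre _ _ h).2.2.1 Label.tau s' trivial hstep

theorem exists_send {s s' t : State} {a : ℕ} (h : SimPre s t) (hstep : Step s (Label.send a) s') :
    ∃ u v t', WeakTau t u ∧ Step u (Label.send a) v ∧ WeakTau v t' ∧ SimPre s' t' := by
  obtain ⟨t', ⟨u, v, hu, huv, hv⟩, hs'⟩ :=
    (isSimulation_simPre _ _ h).2.2.1 (Label.send a) s' trivial hstep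
  exact ⟨u, v, t', hu, huv, hv, hs'⟩

theorem exists_recv {s s' t : State} {a : ℕ} (h : SimPre s t) (hstep : Step s (Label.recv a) s') :
    ∃ t', WeakTau (t.1, Formula.atom a ::ₘ t.2) t' ∧ SimPre s' t' :=
  (isSimulation_simPre _ _ h).2.2.2 a s' hstep

theorem derives_one {Γ₁ : Ctx} {t : State} (h : SimPre (Γ₁, 0) t) :
    Derives t.1 t.2 Formula.one := by
  obtain ⟨Γ₂, hw, -⟩ := h.exists_weakTau_empty
  exact Derives.of_weakTau hw (Derives.oneR Γ₂)

end SimPre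

def SimProvable (A : Formula) : Prop :=
  ∀ (Γ₁ : Ctx) (t : State), SimPre (Γ₁, {A}) t → Derives t.1 t.2 A

namespace SimProvable

theorem atom (a : ℕ) : SimProvable (Formula.atom a) := by
  intro Γ₁ t h
  obtain ⟨u, v, t', hu, huv, hv, ht'⟩ := h.exists_send (Step.send Γ₁ 0 a)
  have hrest : Derives v.1 v.2 Formula.one := Derives.of_weakTau hv ht'.derives_one
  cases huv with
  | send Γ Δ =>
    refine Derives.of_weakTau hu ?_
    rw [← Multiset.singleton_add, add_comm]
    exact hrest.cut_one (Derives.init Γ a)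

theorem one : SimProvable Formula.one := fun Γ₁ _ h =>
  let ⟨_, hw, h'⟩ := h.exists_tau (Step.one Γ₁ 0)
  Derives.of_weakTau hw h'.derives_one

theorem top : SimProvable Formula.top := fun _ t _ => Derives.topR t.1 t.2

theorem tensor {A B : Formula} (hA : SimProvable A) (hB : SimProvable B) :
    SimProvable (Formula.tensor A B) := by
  intro Γ₁ t h
  obtain ⟨t', hw, h'⟩ := h.exists_tau (Step.tensor Γ₁ 0 A B)
  have hsplit : (Γ₁, A ::ₘ B ::ₘ (0 : Ctx)) = State.comp (Γ₁, {A}) (0, {B}) := by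
    simp [State.comp]
  rw [hsplit] at h'
  obtain ⟨t₁, t₂, hw', h₁, h₂⟩ := h'.exists_split
  refine Derives.of_weakTau hw (Derives.of_weakTau hw' (Derives.tensorR ?_ ?_))
  · exact (hA Γ₁ t₁ h₁).weaken (Multiset.le_add_right _ _)
  · exact (hB 0 t₂ h₂).weaken (Multiset.le_add_left _ _)

theorem with_ {A B : Formula} (hA : SimProvable A) (hB : SimProvable B) :
    SimProvable (Formula.with_ A B) := by
  intro Γ₁ t h
  obtain ⟨tA, hwA, h₁⟩ := h.exists_tau (Step.with₁ Γ₁ 0 A B)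
  obtain ⟨tB, hwB, h₂⟩ := h.exists_tau (Step.with₂ Γ₁ 0 A B)
  exact Derives.withR (Derives.of_weakTau hwA (hA Γ₁ tA h₁))
    (Derives.of_weakTau hwB (hB Γ₁ tB h₂))

theorem limp {a : ℕ} {B : Formula} (hB : SimProvable B) : SimProvable (Formula.limp a B) := by
  intro Γ₁ t h
  obtain ⟨t', hw, h'⟩ := h.exists_recv (Step.recv Γ₁ 0 a B)
  exact Derives.limpR (Derives.of_weakTau hw (hB Γ₁ t' h'))

theorem bang {A : Formula} (hA : SimProvable A) : SimProvable (Formula.bang A) := by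
  intro Γ₁ t h
  obtain ⟨t', hw, h'⟩ := h.exists_tau (Step.bang Γ₁ 0 A)
  obtain ⟨Γ₂, hw', h''⟩ := h'.exists_weakTau_empty
  obtain ⟨t'', hw'', hA'⟩ := h''.exists_tau (Step.clone Γ₁ 0 A)
  exact Derives.of_weakTau hw (Derives.of_weakTau hw'
    (Derives.bangR (Derives.of_weakTau hw'' (hA _ t'' hA'))))

end SimProvable

theorem simProvable (A : Formula) : SimProvable A := by
  induction A with
  | atom a => exact SimProvable.atom a
  | one => exact SimProvable.one
  | tensor _ _ ihA ihB => exact ihA.tensor ihB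
  | top => exact SimProvable.top
  | with_ _ _ ihA ihB => exact ihA.with_ ihB
  | limp _ _ ihB => exact ihB.limp
  | bang _ ihA => exact ihA.bang

/-- simulation implies provability. -/
theorem simPre_derives (Γ₁ Γ₂ Δ : Ctx) (A : Formula)
    (h : SimPre (Γ₁, ({A} : Ctx)) (Γ₂, Δ)) :
    Derives Γ₂ Δ A :=
  simProvable A Γ₁ (Γ₂, Δ) h
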